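/- Let p = 2, q a power of 2 with N | (q−1), N | (r^m − 1), r an odd prime. Let P be the r^m × r^m matrix with p_{ij} = φ(x_j − x_i) for i ≠ j and p_{ii} = 1. Then the eigenvalues of P P^T are λ_0 = −1 (= 1) with multiplicity one (for a = 0), and λ_a = −1 + (g(φ,χ_a))² ≠ −1 for a ∈ F_{r^m}^*; consequently the [2r^m, r^m] code with generator matrix [I_{r^m} | P] over F_q has one-dimensional hull. -/

import Mathlib

/-!
View `φ` in `E` as `χ` and let `ψ_a = χ_a`. Then `P = 1 + A` with `A = (χ (j - i))`, and
shifting the summation variable gives `A ψ_a = g_a ψ_a`. In characteristic two `χ(-1)² = 1`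
forces `χ(-1) = 1`, so `A` is symmetric and `P Pᵀ ψ_a = (1 + g_a)² ψ_a = (1 + g_a²) ψ_a`.
Here `g_0 = 0` because `χ ≠ 1`, while for `a ≠ 0` the product of `g_a` with a conjugate Gauss
sum is `r^m`, which is odd, so `g_a ≠ 0`.

The hull of the code generated by `G = [I | P]` is the image of the kernel of
`G Gᵀ = I + P Pᵀ`. The `ψ_a` are distinct characters, hence an eigenbasis of `I + P Pᵀ` with
eigenvalues `g_a²`; only `g_0` vanishes, so the kernel is spanned by the all-ones vector `ψ_0`,
over `E` and therefore over `F`.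
-/

open Finset

/-- The dual code of a linear code `C ⊆ F^ι` with respect to the standard
(Euclidean) inner product. -/
def dualCode {F : Type*} [Field F] {ι : Type*} [Fintype ι]
    (C : Submodule F (ι → F)) : Submodule F (ι → F) where
  carrier := {v | ∀ c ∈ C, dotProduct c v = 0}
  add_mem' := by
    intro a b ha hb c hc
    simp [dotProduct_add, ha c hc, hb c hc]
  zero_mem' := by
    intro c hc
    simp
  smul_mem' := by
    intro t a ha c hc
    simp [dotProduct_smul, ha c hc]

open Matrix

lemma CharP.natCast_prime_pow_ne_zero (R : Type*) [Semiring R] [NoZeroDivisors R] {p r : ℕ}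
    [CharP R p] (hp : p.Prime) (hr : r.Prime) (hrp : r ≠ p) (m : ℕ) : ((r ^ m : ℕ) : R) ≠ 0 := by
  rw [Nat.cast_pow]
  refine pow_ne_zero _ fun h => hrp ?_
  rw [CharP.cast_eq_zero_iff R p, Nat.prime_dvd_prime_iff_eq hp hr] at h
  exact h.symm

section Hull

variable {F ι κ : Type*} [Field F] [Fintype ι] [Fintype κ]

lemma mem_dualCode_span_iff {s : Set (κ → F)} {v : κ → F} :
    v ∈ dualCode (Submodule.span F s) ↔ ∀ c ∈ s, c ⬝ᵥ v = 0 := by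
  refine ⟨fun h c hc => h c (Submodule.subset_span hc), fun h c hc => ?_⟩
  induction hc using Submodule.span_induction with
  | mem c hc => exact h c hc
  | zero => exact zero_dotProduct v
  | add c d _ _ hc hd => rw [add_dotProduct, hc, hd, add_zero]
  | smul t c _ hc => rw [smul_dotProduct, hc, smul_zero]

lemma span_inf_dualCode_eq_map_ker (G : Matrix ι κ F) :
    Submodule.span F (Set.range G.row) ⊓ dualCode (Submodule.span F (Set.range G.row)) =
      (LinearMap.ker (G * Gᵀ).mulVecLin).map G.vecMulLinear := by
  ext v
  rw [Submodule.mem_inf, mem_dualCode_span_iff, Set.forall_mem_range, ← range_vecMulLinear]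
  have hGGT (x : ι → F) : (G * Gᵀ) *ᵥ x = fun i => G.row i ⬝ᵥ G.vecMulLinear x := by
    rw [← mulVec_mulVec, vecMulLinear_apply, ← mulVec_transpose]
    rfl
  constructor
  · rintro ⟨⟨x, rfl⟩, hx⟩
    exact ⟨x, (hGGT x).trans (funext hx), rfl⟩
  · rintro ⟨x, hx, rfl⟩
    exact ⟨⟨x, rfl⟩, congrFun ((hGGT x).symm.trans hx)⟩

lemma finrank_span_inf_dualCode_fromCols_one [DecidableEq ι] (P : Matrix ι κ F) :
    Module.finrank F ↥(Submodule.span F (Set.range (fromCols (1 : Matrix ι ι F) P).row) ⊓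
        dualCode (Submodule.span F (Set.range (fromCols (1 : Matrix ι ι F) P).row))) =
      Module.finrank F (LinearMap.ker (1 + P * Pᵀ).mulVecLin) := by
  have hinj : Function.Injective (fromCols (1 : Matrix ι ι F) P).vecMulLinear := fun x y h => by
    simpa using congrArg (fun v => v ∘ Sum.inl) h
  rw [span_inf_dualCode_eq_map_ker, ← (Submodule.equivMapOfInjective _ hinj _).finrank_eq,
    transpose_fromCols, fromCols_mul_fromRows, transpose_one, mul_one]

end Hull

section Descent

variable {F E n : Type*} [Field F] [Field E] (f : F →+* E)

lemma RingHom.comp_mem_span_one_iff {v : n → F} : f ∘ v ∈ E ∙ (1 : n → E) ↔ v ∈ F ∙ (1 : n → F) := by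
  simp only [Submodule.mem_span_singleton]
  refine ⟨fun ⟨c, hc⟩ => ?_, fun ⟨t, ht⟩ => ⟨f t, by ext; simp [← ht]⟩⟩
  cases isEmpty_or_nonempty n with
  | inl _ => exact ⟨0, Subsingleton.elim _ _⟩
  | inr hn =>
    obtain ⟨i₀⟩ := hn
    refine ⟨v i₀, funext fun j => f.injective ?_⟩
    have hc' (i : n) : c = f (v i) := by simpa using congrFun hc i
    simp [← hc']

lemma ker_mulVecLin_eq_span_one_of_map [Fintype n] {Q : Matrix n n F}
    (h : LinearMap.ker (Q.map f).mulVecLin = E ∙ 1) : LinearMap.ker Q.mulVecLin = F ∙ 1 := by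
  ext v
  rw [← f.comp_mem_span_one_iff, ← h, LinearMap.mem_ker, LinearMap.mem_ker, mulVecLin_apply,
    mulVecLin_apply, ← f.injective.comp_left.eq_iff]
  have hcomp : f ∘ (Q *ᵥ v) = Q.map f *ᵥ (f ∘ v) := funext (RingHom.map_mulVec f Q v)
  have hzero : f ∘ (0 : n → F) = 0 := funext fun _ => map_zero f
  rw [hcomp, hzero]

end Descent

/-- `x ↦ ζ ^ Tr(x)`; its multiplicative shifts by `a` are the characters `χ_a`. -/
noncomputable def traceAddChar (r : ℕ) [NeZero r] (K : Type*) [Field K] [Algebra (ZMod r) K]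
    {E : Type*} [CommRing E] {ζ : E} (hζ : ζ ^ r = 1) : AddChar K E :=
  (AddChar.zmodChar r hζ).compAddMonoidHom (Algebra.trace (ZMod r) K).toAddMonoidHom

lemma traceAddChar_isPrimitive {r : ℕ} [Fact r.Prime] {K : Type*} [Field K] [Finite K]
    [Algebra (ZMod r) K] {E : Type*} [CommRing E] {ζ : E} (hζ : IsPrimitiveRoot ζ r) :
    (traceAddChar r K hζ.pow_eq_one).IsPrimitive := by
  refine AddChar.IsPrimitive.of_ne_one fun h => ?_
  obtain ⟨x, hx⟩ := Algebra.trace_surjective (ZMod r) K 1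
  have hψx : traceAddChar r K hζ.pow_eq_one x = ζ := by
    rw [traceAddChar, AddChar.compAddMonoidHom_apply, LinearMap.toAddMonoidHom_coe, hx,
      AddChar.zmodChar_apply, ZMod.val_one, pow_one]
  rw [h, AddChar.one_apply] at hψx
  exact hζ.ne_one (Fact.out : r.Prime).one_lt hψx.symm

lemma gaussSum_eq_sum_sdiff_zero {R R' : Type*} [CommRing R] [Nontrivial R] [Fintype R]
    [DecidableEq R] [CommRing R'] (χ : MulChar R R') (ψ : AddChar R R') :
    gaussSum χ ψ = ∑ x ∈ univ \ {0}, χ x * ψ x := by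
  rw [gaussSum, sum_eq_add_sum_sdiff_singleton_of_mem (mem_univ 0), χ.map_zero, zero_mul, zero_add]

namespace MulChar

variable {R R' : Type*} [CommRing R] [CommRing R']

def diffMatrix (χ : MulChar R R') : Matrix R R R' := of fun i j => χ (j - i)

lemma diffMatrix_mulVec [Fintype R] (χ : MulChar R R') (ψ : AddChar R R') :
    χ.diffMatrix *ᵥ ⇑ψ = gaussSum χ ψ • ⇑ψ := funext fun i => by
  rw [Pi.smul_apply, smul_eq_mul, gaussSum, sum_mul]
  refine Fintype.sum_equiv (Equiv.subRight i) _ _ fun j => ?_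
  rw [Equiv.subRight_apply, mul_assoc, ← AddChar.map_add_eq_mul, sub_add_cancel]
  rfl

lemma diffMatrix_transpose {χ : MulChar R R'} (hχ : χ (-1) = 1) :
    χ.diffMatrixᵀ = χ.diffMatrix := by
  ext i j
  rw [transpose_apply, diffMatrix, of_apply, of_apply, ← neg_sub, neg_eq_neg_one_mul, map_mul, hχ,
    one_mul]

lemma map_neg_one_of_charTwo [CharP R' 2] [NoZeroDivisors R'] (χ : MulChar R R') : χ (-1) = 1 :=
  CharTwo.sq_injective (by simp only [← map_pow, neg_one_sq, map_one, one_pow])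

variable [DecidableEq R]

lemma of_ite_eq_one_add_diffMatrix [Nontrivial R] (χ : MulChar R R') :
    (of fun i j => if j = i then 1 else χ (j - i)) = 1 + χ.diffMatrix := by
  ext i j
  by_cases hji : j = i
  · simp [hji, diffMatrix]
  · simp [hji, diffMatrix, one_apply_ne (Ne.symm hji)]

lemma one_add_diffMatrix_map {R'' : Type*} [CommRing R''] (χ : MulChar R R') (f : R' →+* R'') :
    (1 + χ.diffMatrix).map f = 1 + (χ.ringHomComp f).diffMatrix := by
  rw [Matrix.map_add _ (map_add f), Matrix.map_one _ (map_zero f) (map_one f)]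
  rfl

variable [Fintype R]

lemma one_add_diffMatrix_mulVec (χ : MulChar R R') (ψ : AddChar R R') :
    (1 + χ.diffMatrix) *ᵥ ⇑ψ = (1 + gaussSum χ ψ) • ⇑ψ := by
  rw [add_mulVec, one_mulVec, diffMatrix_mulVec, add_smul, one_smul]

lemma one_add_diffMatrix_mul_transpose_mulVec [CharP R' 2] [NoZeroDivisors R']
    (χ : MulChar R R') (ψ : AddChar R R') :
    ((1 + χ.diffMatrix) * (1 + χ.diffMatrix)ᵀ) *ᵥ ⇑ψ = (1 + gaussSum χ ψ ^ 2) • ⇑ψ := by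
  rw [transpose_add, transpose_one, diffMatrix_transpose χ.map_neg_one_of_charTwo, ← mulVec_mulVec,
    one_add_diffMatrix_mulVec, mulVec_smul, one_add_diffMatrix_mulVec, smul_smul, ← sq,
    CharTwo.add_sq, one_pow]

end MulChar

lemma AddChar.linearIndependent_mulShift {R R' : Type*} [CommRing R] [CommRing R'] [IsDomain R']
    {ψ : AddChar R R'} (hψ : ψ.IsPrimitive) :
    LinearIndependent R' fun a => ⇑(ψ.mulShift a) :=
  (linearIndependent_monoidHom (Multiplicative R) R').comp (fun a => (ψ.mulShift a).toMonoidHom)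
    (AddChar.toMonoidHomEquiv.injective.comp (AddChar.to_mulShift_inj_of_isPrimitive hψ))

lemma Module.Basis.ker_le_span_singleton_of_apply_eq_smul {ι K V : Type*} [Fintype ι] [Field K] [AddCommGroup V]
    [Module K V] (b : Basis ι K V) {T : V →ₗ[K] V} {d : ι → K} (hT : ∀ i, T (b i) = d i • b i)
    {i₀ : ι} (hd : ∀ i ≠ i₀, d i ≠ 0) : LinearMap.ker T ≤ K ∙ b i₀ := by
  intro w hw
  have hcoeff : ∀ i, (b.equivFun w i * d i) = 0 := by
    refine Fintype.linearIndependent_iff.mp b.linearIndependent _ ?_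
    simp_rw [mul_smul, ← hT, ← map_smul, ← map_sum, b.sum_equivFun]
    exact hw
  rw [← b.sum_equivFun w, Finset.sum_eq_single i₀ (fun i _ hi => by
      rw [(mul_eq_zero.mp (hcoeff i)).resolve_right (hd i hi), zero_smul])
    (fun h => absurd (mem_univ i₀) h)]
  exact Submodule.smul_mem _ _ (Submodule.mem_span_singleton_self _)

lemma ker_one_add_mul_transpose_diffMatrix {K E : Type*} [Field K] [Fintype K] [DecidableEq K]
    [Field E] [CharP E 2] {χ : MulChar K E} (hχ : χ ≠ 1) {ψ : AddChar K E}
    (hψ : ψ.IsPrimitive) (hK : (Fintype.card K : E) ≠ 0) :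
    LinearMap.ker (1 + (1 + χ.diffMatrix) * (1 + χ.diffMatrix)ᵀ).mulVecLin = E ∙ 1 := by
  have heigen (a : K) : (1 + (1 + χ.diffMatrix) * (1 + χ.diffMatrix)ᵀ).mulVecLin (ψ.mulShift a) =
      gaussSum χ (ψ.mulShift a) ^ 2 • ⇑(ψ.mulShift a) := by
    rw [mulVecLin_apply, add_mulVec, one_mulVec, χ.one_add_diffMatrix_mul_transpose_mulVec,
      add_smul, one_smul, ← add_assoc, CharTwo.add_self_eq_zero, zero_add]
  let b := basisOfLinearIndependentOfCardEqFinrank (ψ.linearIndependent_mulShift hψ)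
    (Module.finrank_fintype_fun_eq_card E).symm
  have hb0 : b 0 = 1 := by
    simp [b, AddChar.mulShift_zero]
  refine le_antisymm ?_ ?_
  · refine hb0 ▸ b.ker_le_span_singleton_of_apply_eq_smul (fun a => by simpa [b] using heigen a) fun a ha => ?_
    exact pow_ne_zero _ (gaussSum_ne_zero_of_nontrivial hK hχ
      (AddChar.IsPrimitive.of_ne_one (hψ ha)))
  · rw [Submodule.span_le, Set.singleton_subset_iff, SetLike.mem_coe, LinearMap.mem_ker]
    simpa [AddChar.mulShift_zero, gaussSum_one_right hχ] using heigen 0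

theorem one_dim_hull_char_two_general {r m N : ℕ} [Fact r.Prime] (hrodd : r ≠ 2)
    (hN : 1 < N)
    {K F E : Type*} [Field K] [Fintype K] [DecidableEq K] [Algebra (ZMod r) K]
    (hK : Fintype.card K = r ^ m)
    [Field F]
    [Field E] [CharP E 2] [Algebra F E]
    (ζ : E) (hζ : IsPrimitiveRoot ζ r)
    (φ : MulChar K F) (hord : orderOf φ = N) :
    let η : K → K → E := fun a x => ζ ^ (Algebra.trace (ZMod r) K (a * x)).val
    let g : K → E := fun a =>
      ∑ x ∈ univ \ {0},
        algebraMap F E (φ x) * ζ ^ (Algebra.trace (ZMod r) K (a * x)).val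
    let P : Matrix K K F := Matrix.of fun i j => if j = i then 1 else φ (j - i)
    let G := Matrix.fromCols (1 : Matrix K K F) P
    let C := Submodule.span F (Set.range fun i => G i)
    let M := (P * P.transpose).map (algebraMap F E)
    (M.mulVec (η 0) = (-1 : E) • η 0) ∧
      (∀ a : K, a ≠ 0 → M.mulVec (η a) = (-1 + (g a) ^ 2) • η a ∧ -1 + (g a) ^ 2 ≠ (-1 : E)) ∧
      Module.finrank F ↥(C ⊓ dualCode C) = 1 := by
  intro η g P G C M
  set f := algebraMap F E
  set χ : MulChar K E := φ.ringHomComp f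
  set ψ := traceAddChar r K hζ.pow_eq_one
  have hχ : χ ≠ 1 := (MulChar.ringHomComp_ne_one_iff f.injective).mpr fun h => by
    rw [h, orderOf_one] at hord
    omega
  have hψ : ψ.IsPrimitive := traceAddChar_isPrimitive hζ
  have hcard : (Fintype.card K : E) ≠ 0 :=
    hK ▸ CharP.natCast_prime_pow_ne_zero E Nat.prime_two Fact.out hrodd m
  have hg (a : K) : g a = gaussSum χ (ψ.mulShift a) := by
    rw [gaussSum_eq_sum_sdiff_zero]
    rfl
  have hPE : P.map f = 1 + χ.diffMatrix := by
    rw [← φ.one_add_diffMatrix_map, ← φ.of_ite_eq_one_add_diffMatrix]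
  have hM : M = (1 + χ.diffMatrix) * (1 + χ.diffMatrix)ᵀ := by
    rw [← hPE, ← transpose_map, ← Matrix.map_mul]
  have heigen (a : K) : M *ᵥ η a = (-1 + g a ^ 2) • η a := by
    rw [CharTwo.neg_eq, hg, hM]
    exact χ.one_add_diffMatrix_mul_transpose_mulVec (ψ.mulShift a)
  refine ⟨?_, fun a ha => ⟨heigen a, ?_⟩, ?_⟩
  · simpa [hg, AddChar.mulShift_zero, gaussSum_one_right hχ] using heigen 0
  · rw [Ne, add_eq_left, hg]
    exact pow_ne_zero _ (gaussSum_ne_zero_of_nontrivial hcard hχ (.of_ne_one (hψ ha)))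
  · have hQ : (1 + P * Pᵀ).map f = 1 + M := by
      rw [← f.mapMatrix_apply, map_add, map_one]
      rfl
    rw [hM] at hQ
    refine (finrank_span_inf_dualCode_fromCols_one P).trans ?_
    rw [ker_mulVecLin_eq_span_one_of_map f (hQ ▸ ker_one_add_mul_transpose_diffMatrix hχ hψ hcard),
      finrank_span_singleton one_ne_zero]

/-- `q` a power of `2`, `r` an odd prime, `N ∣ q - 1`, `N ∣ r^m - 1`, and
`P` the `r^m × r^m` matrix with `p_{ij} = φ(x_j - x_i)` off the diagonal and `1` on the
diagonal.  Then the eigenvalues of `P Pᵀ` are `λ_0 = -1` (for `a = 0`) and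
`λ_a = -1 + g(φ,χ_a)² ≠ -1` for `a ≠ 0`; consequently the `[2 r^m, r^m]` code with
generator matrix `[I | P]` over `F_q` has one-dimensional hull. -/
theorem one_dim_hull_char_two {r m e q N : ℕ} [Fact r.Prime] (hrodd : r ≠ 2)
    (hm : 0 < m) (he : 0 < e) (hq : q = 2 ^ e)
    (hN : 1 < N) (hNr : N ∣ r ^ m - 1) (hNq : N ∣ q - 1)
    {K F E : Type*} [Field K] [Fintype K] [DecidableEq K] [Algebra (ZMod r) K]
    (hK : Fintype.card K = r ^ m)
    [Field F] [Fintype F] [CharP F 2] (hF : Fintype.card F = q)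
    [Field E] [CharP E 2] [IsAlgClosed E] [Algebra F E]
    (ζ : E) (hζ : IsPrimitiveRoot ζ r)
    (φ : MulChar K F) (hord : orderOf φ = N) :
    let η : K → K → E := fun a x => ζ ^ (Algebra.trace (ZMod r) K (a * x)).val
    let g : K → E := fun a =>
      ∑ x ∈ univ \ {0},
        algebraMap F E (φ x) * ζ ^ (Algebra.trace (ZMod r) K (a * x)).val
    let P : Matrix K K F := Matrix.of fun i j => if j = i then 1 else φ (j - i)
    let G := Matrix.fromCols (1 : Matrix K K F) P
    let C := Submodule.span F (Set.range fun i => G i)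
    let M := (P * P.transpose).map (algebraMap F E)
    (M.mulVec (η 0) = (-1 : E) • η 0) ∧
      (∀ a : K, a ≠ 0 → M.mulVec (η a) = (-1 + (g a) ^ 2) • η a ∧ -1 + (g a) ^ 2 ≠ (-1 : E)) ∧
      Module.finrank F ↥(C ⊓ dualCode C) = 1 :=
  one_dim_hull_char_two_general hrodd hN hK ζ hζ φ hord
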